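/- arXiv:2510.25915 — 2 statements merged into one kernel-verified Lean document; each statement's English description precedes it below -/
import Mathlib

section
/- Contextual bound on computational power (Theorem 5, abstract form): let f : (Fin m → ZMod 2) → (Fin ℓ → ZMod 2), let λ ∈ [0,1], and let p, q, q' : (Fin m → ZMod 2) → (Fin ℓ → ZMod 2) → ℝ satisfy: (i) for every r, the values q' r s are nonnegative and ∑_s q' r s = 1; (ii) p r s = λ * q r s + (1 − λ) * q' r s for all r, s; (iii) q is a convex combination of affine deterministic distributions, i.e. there exist a finite type ι, weights μ : ι → ℝ with μ i ≥ 0 and ∑_i μ i = 1, and affine maps h : ι → ((Fin m → ZMod 2) → (Fin ℓ → ZMod 2)) such that q r s = ∑_i μ i * (if s = h i r then 1 else 0). Then p_succ(p, f) ≤ 1 − λ * ν(f). -/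
open BigOperators

/-- A Boolean map is affine if it is a `ZMod 2`-linear map plus a constant. -/
def IsAffine {m ℓ : ℕ} (f : (Fin m → ZMod 2) → (Fin ℓ → ZMod 2)) : Prop :=
  ∃ (A : (Fin m → ZMod 2) →ₗ[ZMod 2] (Fin ℓ → ZMod 2)) (c : Fin ℓ → ZMod 2),
    ∀ x : Fin m → ZMod 2, f x = A x + c

/-- The average distance between two Boolean functions. -/
noncomputable def avgDist {m ℓ : ℕ} (f g : (Fin m → ZMod 2) → (Fin ℓ → ZMod 2)) : ℝ :=
  ((Finset.univ.filter (fun r : Fin m → ZMod 2 => f r ≠ g r)).card : ℝ) / 2 ^ m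

/-- The average distance of `f` to the closest affine Boolean function. -/
noncomputable def nu {m ℓ : ℕ} (f : (Fin m → ZMod 2) → (Fin ℓ → ZMod 2)) : ℝ :=
  sInf { d : ℝ | ∃ h : (Fin m → ZMod 2) → (Fin ℓ → ZMod 2), IsAffine h ∧ d = avgDist f h }

/-- The average success probability of `p` at computing `f`. -/
noncomputable def psucc {m ℓ : ℕ} (p : (Fin m → ZMod 2) → (Fin ℓ → ZMod 2) → ℝ)
    (f : (Fin m → ZMod 2) → (Fin ℓ → ZMod 2)) : ℝ :=
  (1 / 2 ^ m) * ∑ r : Fin m → ZMod 2, p r (f r)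

lemma nu_le_avgDist {m ℓ : ℕ} (f g : (Fin m → ZMod 2) → (Fin ℓ → ZMod 2))
    (hg : IsAffine g) : nu f ≤ avgDist f g := by
  apply csInf_le
  · refine ⟨0, fun d hd => ?_⟩
    obtain ⟨h, _, rfl⟩ := hd
    exact div_nonneg (Nat.cast_nonneg _) (by positivity)
  · exact ⟨g, hg, rfl⟩

/-- Contextual bound on computational power: if `p = λ q + (1 − λ) q'` where `q`
is a convex combination of affine deterministic distributions and `q'` is a
distribution, then `p_succ(p, f) ≤ 1 − λ ν(f)`. -/
theorem contextual_bound_on_computational_power (m ℓ : ℕ)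
    (f : (Fin m → ZMod 2) → (Fin ℓ → ZMod 2))
    (lam : ℝ) (hlam0 : 0 ≤ lam) (hlam1 : lam ≤ 1)
    (p q q' : (Fin m → ZMod 2) → (Fin ℓ → ZMod 2) → ℝ)
    (hq'nonneg : ∀ r s, 0 ≤ q' r s)
    (hq'sum : ∀ r, ∑ s : Fin ℓ → ZMod 2, q' r s = 1)
    (hdecomp : ∀ r s, p r s = lam * q r s + (1 - lam) * q' r s)
    (ι : Type) [Fintype ι] (μ : ι → ℝ) (hμ : ∀ i, 0 ≤ μ i) (hμsum : ∑ i : ι, μ i = 1)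
    (h : ι → ((Fin m → ZMod 2) → (Fin ℓ → ZMod 2))) (haff : ∀ i, IsAffine (h i))
    (hq : ∀ r s, q r s = ∑ i : ι, μ i * (if s = h i r then (1 : ℝ) else 0)) :
    psucc p f ≤ 1 - lam * nu f := by
  have h2m : (0:ℝ) < 2 ^ m := by positivity
  -- q' success ≤ 1
  have hq'le : psucc q' f ≤ 1 := by
    have : ∀ r : Fin m → ZMod 2, q' r (f r) ≤ 1 := by
      intro r
      rw [← hq'sum r]
      exact Finset.single_le_sum (fun s _ => hq'nonneg r s) (Finset.mem_univ _)
    calc psucc q' f ≤ (1 / 2 ^ m) * ∑ _r : Fin m → ZMod 2, (1:ℝ) := by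
          apply mul_le_mul_of_nonneg_left
          · exact Finset.sum_le_sum (fun r _ => this r)
          · positivity
      _ = 1 := by
          rw [Finset.sum_const, Finset.card_univ]
          simp [Fintype.card_fun]
  -- q success = ∑ μ i (1 - avgDist f (h i))
  have hqsucc : psucc q f = ∑ i : ι, μ i * (1 - avgDist f (h i)) := by
    unfold psucc
    have : ∑ r : Fin m → ZMod 2, q r (f r)
        = ∑ i : ι, μ i * ((Finset.univ.filter (fun r : Fin m → ZMod 2 => f r = h i r)).card : ℝ) := by
      simp only [hq]
      rw [Finset.sum_comm]
      congr 1
      ext i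
      rw [← Finset.mul_sum]
      congr 1
      rw [Finset.sum_boole]
    rw [this, Finset.mul_sum]
    congr 1
    ext i
    have hcard : ((Finset.univ.filter (fun r : Fin m → ZMod 2 => f r = h i r)).card : ℝ)
        = 2 ^ m - ((Finset.univ.filter (fun r : Fin m → ZMod 2 => f r ≠ h i r)).card : ℝ) := by
      have := Finset.card_filter_add_card_filter_not
        (s := (Finset.univ : Finset (Fin m → ZMod 2)))
        (p := fun r => f r = h i r)
      have hcu : (Finset.univ : Finset (Fin m → ZMod 2)).card = 2 ^ m := by
        simp [Finset.card_univ, Fintype.card_fun]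
      rw [hcu] at this
      have := congrArg (Nat.cast : ℕ → ℝ) this
      push_cast at this
      simp only [ne_eq]
      linarith
    rw [hcard]
    unfold avgDist
    field_simp
  have hqle : psucc q f ≤ 1 - nu f := by
    rw [hqsucc]
    calc ∑ i : ι, μ i * (1 - avgDist f (h i))
        ≤ ∑ i : ι, μ i * (1 - nu f) := by
          apply Finset.sum_le_sum
          intro i _
          exact mul_le_mul_of_nonneg_left (by linarith [nu_le_avgDist f (h i) (haff i)]) (hμ i)
      _ = 1 - nu f := by rw [← Finset.sum_mul, hμsum, one_mul]
  -- combine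
  have hsplit : psucc p f = lam * psucc q f + (1 - lam) * psucc q' f := by
    unfold psucc
    simp only [hdecomp]
    rw [Finset.sum_add_distrib, ← Finset.mul_sum, ← Finset.mul_sum]
    ring
  rw [hsplit]
  nlinarith [hqle, hq'le, hlam0, hlam1]
end

section
/- Deterministic computation of a non-affine function forces strong contextuality (Corollary, abstract form): let f : (Fin m → ZMod 2) → (Fin ℓ → ZMod 2) be a function that is not affine, let λ ∈ [0,1], and let p, q, q' : (Fin m → ZMod 2) → (Fin ℓ → ZMod 2) → ℝ satisfy: (i) p r s = if s = f r then (1 : ℝ) else 0 for all r, s; (ii) for every r, the values q' r s are nonnegative and ∑_s q' r s = 1; (iii) p r s = λ * q r s + (1 − λ) * q' r s for all r, s; (iv) there exist a finite type ι, weights μ : ι → ℝ with μ i ≥ 0 and ∑_i μ i = 1, and affine maps h : ι → ((Fin m → ZMod 2) → (Fin ℓ → ZMod 2)) such that q r s = ∑_i μ i * (if s = h i r then 1 else 0). Then λ = 0. -/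
open BigOperators

/-- Deterministic computation of a non-affine function forces strong contextuality:
if the deterministic distribution of a non-affine `f` decomposes as
`λ q + (1 − λ) q'` with `q` a convex combination of affine deterministic
distributions and `q'` a distribution, then `λ = 0`. -/
theorem deterministic_nonaffine_forces_strong_contextuality (m ℓ : ℕ)
    (f : (Fin m → ZMod 2) → (Fin ℓ → ZMod 2)) (hf : ¬ IsAffine f)
    (lam : ℝ) (hlam0 : 0 ≤ lam) (hlam1 : lam ≤ 1)
    (p q q' : (Fin m → ZMod 2) → (Fin ℓ → ZMod 2) → ℝ)
    (hp : ∀ r s, p r s = if s = f r then (1 : ℝ) else 0)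
    (hq'nonneg : ∀ r s, 0 ≤ q' r s)
    (hq'sum : ∀ r, ∑ s : Fin ℓ → ZMod 2, q' r s = 1)
    (hdecomp : ∀ r s, p r s = lam * q r s + (1 - lam) * q' r s)
    (ι : Type) [Fintype ι] (μ : ι → ℝ) (hμ : ∀ i, 0 ≤ μ i) (hμsum : ∑ i : ι, μ i = 1)
    (h : ι → ((Fin m → ZMod 2) → (Fin ℓ → ZMod 2))) (haff : ∀ i, IsAffine (h i))
    (hq : ∀ r s, q r s = ∑ i : ι, μ i * (if s = h i r then (1 : ℝ) else 0)) :
    lam = 0 := by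
  by_contra hne
  have hlam : 0 < lam := lt_of_le_of_ne hlam0 (Ne.symm hne)
  -- find i with μ i > 0
  obtain ⟨i, hi⟩ : ∃ i, 0 < μ i := by
    by_contra hc
    push_neg at hc
    have : ∀ i, μ i = 0 := fun i => le_antisymm (hc i) (hμ i)
    simp [this] at hμsum
  -- h i agrees with f everywhere
  have hagree : ∀ r, h i r = f r := by
    intro r
    by_contra hrs
    have hps : p r (h i r) = 0 := by rw [hp]; simp [hrs]
    have hqge : μ i ≤ q r (h i r) := by
      rw [hq]
      have := Finset.single_le_sum
        (f := fun j => μ j * (if h i r = h j r then (1:ℝ) else 0))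
        (fun j _ => mul_nonneg (hμ j) (by split <;> norm_num))
        (Finset.mem_univ i)
      simpa using this
    have h1 : 0 < lam * q r (h i r) := mul_pos hlam (lt_of_lt_of_le hi hqge)
    have h2 : 0 ≤ (1 - lam) * q' r (h i r) :=
      mul_nonneg (by linarith) (hq'nonneg r _)
    have := hdecomp r (h i r)
    rw [hps] at this
    linarith
  exact hf (by obtain ⟨A, c, hAc⟩ := haff i; exact ⟨A, c, fun x => by rw [← hagree x, hAc x]⟩)
end
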